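/- arXiv:1411.0294 — 2 statements merged into one kernel-verified Lean document; each statement's English description precedes it below -/
import Mathlib

section
/- Let ε ∈ (0,1) and W, W̃ : 𝒳 → 𝒫(𝒴) be channels with d(W,W̃) ≤ ε, where d(W,W̃) = max_{x} Σ_{y} |W(y|x)−W̃(y|x)|. For any n ∈ ℕ, finite sets 𝒰, 𝒱, uniform P_U, conditional P_{V|U}, and stochastic encoder E : 𝒱 → 𝒫(𝒳ⁿ), let Yⁿ and Ỹⁿ be the outputs of the memoryless extensions Wⁿ and W̃ⁿ when the input is generated via U → V → Xⁿ. Then |I(V;Yⁿ|U) − I(V;Ỹⁿ|U)| ≤ n·(4ε log|𝒴| + 4H₂(ε)). -/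
open Finset Real

noncomputable def H2 (e : ℝ) : ℝ := -(e * Real.logb 2 e) - (1 - e) * Real.logb 2 (1 - e)

def IsPMF {α : Type*} [Fintype α] (p : α → ℝ) : Prop :=
  (∀ a, 0 ≤ p a) ∧ ∑ a, p a = 1

noncomputable def ent {α : Type*} [Fintype α] (p : α → ℝ) : ℝ :=
  -∑ a, p a * Real.logb 2 (p a)

/-- Conditional mutual information `I(B ; C | A)` for a joint distribution on `α × β × γ`. -/
noncomputable def condMI {α β γ : Type*} [Fintype α] [Fintype β] [Fintype γ]
    (p : α × β × γ → ℝ) : ℝ :=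
  ent (fun x : α × β => ∑ c, p (x.1, x.2, c)) + ent (fun x : α × γ => ∑ b, p (x.1, b, x.2))
    - ent p - ent (fun a => ∑ b, ∑ c, p (a, b, c))

/-! Write `η x = -x log x` and `m = |𝒴|`. The pointwise estimate
`|η a - η b| ≤ η |a - b| + |a - b|` and Jensen's `∑ η tᵢ ≤ (∑ tᵢ) log m + η (∑ tᵢ)` give a
Fannes-type bound `|H p - H q| ≤ 2ε log m + 2 H₂(ε)` for laws at `ℓ¹`-distance at most `ε` (for
`ε > 1/2` already `0 ≤ H ≤ log m` suffices). By the grouping rule the bound persists for joint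
laws with a common marginal whose conditional laws are `ε`-close, which is the situation when one
channel use is switched from `W` to `W'`. Switching the `n` uses one at a time changes each of
`H(U, Yⁿ)` and `H(U, V, Yⁿ)` by at most `n (2ε log m + 2 H₂(ε))`, while the other two terms of
`I(V; Yⁿ | U)`, namely `H(U, V)` and `H(U)`, do not see the channel. -/

namespace Real

lemma negMulLog_add_le {x y : ℝ} (hx : 0 ≤ x) (hy : 0 ≤ y) :
    negMulLog (x + y) ≤ negMulLog x + negMulLog y := by
  rcases hx.eq_or_lt with rfl | hx'
  · simp
  rcases hy.eq_or_lt with rfl | hy'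
  · simp
  have hlx := log_le_log hx' (le_add_of_nonneg_right hy)
  have hly := log_le_log hy' (le_add_of_nonneg_left hx)
  simp only [negMulLog]
  nlinarith

lemma negMulLog_add_self_le {a b : ℝ} (hb : 0 ≤ b) (hba : b ≤ a) (ha : a ≤ 1) :
    negMulLog b + b ≤ negMulLog a + a := by
  rcases hb.eq_or_lt with rfl | hb'
  · simpa using add_nonneg (negMulLog_nonneg hba ha) hba
  have ha' := hb'.trans_le hba
  have hlog : b * (log a - log b) ≤ a - b := by
    rw [← log_div ha'.ne' hb'.ne']
    calc b * log (a / b) ≤ b * (a / b - 1) := by gcongr; exact log_le_sub_one_of_pos (by positivity)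
      _ = a - b := by field_simp
  have hloga : (a - b) * log a ≤ 0 :=
    mul_nonpos_of_nonneg_of_nonpos (by linarith) (log_nonpos ha'.le ha)
  simp only [negMulLog]
  nlinarith

lemma abs_negMulLog_sub_le {a b : ℝ} (ha₀ : 0 ≤ a) (ha₁ : a ≤ 1) (hb₀ : 0 ≤ b) (hb₁ : b ≤ 1) :
    |negMulLog a - negMulLog b| ≤ negMulLog |a - b| + |a - b| := by
  wlog hba : b ≤ a generalizing a b
  · rw [abs_sub_comm, abs_sub_comm a]; exact this hb₀ hb₁ ha₀ ha₁ (by linarith)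
  rw [abs_of_nonneg (sub_nonneg.2 hba), abs_sub_le_iff]
  have hsub := negMulLog_add_le hb₀ (sub_nonneg.2 hba)
  rw [add_sub_cancel] at hsub
  have := negMulLog_add_self_le hb₀ hba ha₁
  have := negMulLog_nonneg (sub_nonneg.2 hba) (by linarith)
  constructor <;> linarith

lemma sum_negMulLog_le {ι : Type*} [Fintype ι] [Nonempty ι] {t : ι → ℝ} (ht : ∀ i, 0 ≤ t i) :
    ∑ i, negMulLog (t i) ≤ (∑ i, t i) * log (Fintype.card ι) + negMulLog (∑ i, t i) := by
  set m : ℝ := (Fintype.card ι : ℝ)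
  have hm : 0 < m := by positivity
  have jensen := concaveOn_negMulLog.le_map_sum (t := Finset.univ) (w := fun _ => m⁻¹)
    (p := t) (fun _ _ => by positivity) (by simp [Finset.card_univ, m]) (fun i _ => ht i)
  simp only [smul_eq_mul, ← Finset.mul_sum, negMulLog_mul] at jensen
  have hinv : negMulLog m⁻¹ = m⁻¹ * log m := by simp [negMulLog, log_inv]
  rw [hinv] at jensen
  have := mul_le_mul_of_nonneg_left jensen hm.le
  field_simp at this
  linarith

end Real

namespace IsPMF

variable {α : Type*} [Fintype α] {p : α → ℝ}

lemma le_one (hp : IsPMF p) (a : α) : p a ≤ 1 :=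
  hp.2 ▸ Finset.single_le_sum (fun i _ => hp.1 i) (Finset.mem_univ a)

lemma sum_negMulLog_nonneg (hp : IsPMF p) : 0 ≤ ∑ a, negMulLog (p a) :=
  Finset.sum_nonneg fun a _ => negMulLog_nonneg (hp.1 a) (hp.le_one a)

lemma sum_negMulLog_le_log_card [Nonempty α] (hp : IsPMF p) :
    ∑ a, negMulLog (p a) ≤ log (Fintype.card α) := by
  simpa [hp.2] using sum_negMulLog_le hp.1

lemma compProd {α β : Type*} [Fintype α] [Fintype β] {p : α → ℝ} {K : α → β → ℝ}
    (hp : IsPMF p) (hK : ∀ a, IsPMF (K a)) : IsPMF fun t : α × β => p t.1 * K t.1 t.2 :=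
  ⟨fun t => mul_nonneg (hp.1 _) ((hK _).1 _), by
    simp [Fintype.sum_prod_type, ← Finset.mul_sum, (hK _).2, hp.2]⟩

end IsPMF

lemma isPMF_uniform (α : Type*) [Fintype α] [Nonempty α] :
    IsPMF fun _ : α => (Fintype.card α : ℝ)⁻¹ :=
  ⟨fun _ => by positivity, by simp⟩

lemma isPMF_div_sum {α : Type*} [Fintype α] {r : α → ℝ} (hr : ∀ a, 0 ≤ r a)
    (hc : 0 < ∑ a, r a) : IsPMF fun a => r a / ∑ b, r b :=
  ⟨fun a => div_nonneg (hr a) hc.le, by rw [← Finset.sum_div, div_self hc.ne']⟩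

lemma sum_negMulLog_eq_mul_sum_negMulLog_div_add {α : Type*} [Fintype α] (r : α → ℝ)
    (hc : ∑ a, r a ≠ 0) :
    ∑ a, negMulLog (r a)
      = (∑ a, r a) * ∑ a, negMulLog (r a / ∑ b, r b) + negMulLog (∑ a, r a) := by
  set c := ∑ a, r a
  calc ∑ a, negMulLog (r a) = ∑ a, negMulLog (c * (r a / c)) := by
        simp only [mul_div_cancel₀ _ hc]
    _ = (∑ a, r a / c) * negMulLog c + c * ∑ a, negMulLog (r a / c) := by
        simp only [negMulLog_mul, Finset.sum_add_distrib, Finset.sum_mul, Finset.mul_sum]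
    _ = c * ∑ a, negMulLog (r a / c) + negMulLog c := by
        rw [← Finset.sum_div, div_self hc, one_mul, add_comm]

lemma ent_eq_sum_negMulLog_div {α : Type*} [Fintype α] (p : α → ℝ) :
    ent p = (∑ a, negMulLog (p a)) / log 2 := by
  simp only [ent, negMulLog, logb, Finset.sum_div, ← Finset.sum_neg_distrib]
  exact Finset.sum_congr rfl fun a _ => by ring

lemma H2_eq_binEntropy_div (e : ℝ) : H2 e = binEntropy e / log 2 := by
  simp only [H2, binEntropy, logb, log_inv]
  ring

section Fannes

variable {Y : Type*} [Fintype Y] [Nonempty Y] {p q : Y → ℝ} {ε : ℝ}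

lemma abs_sum_negMulLog_sub_le_of_sum_abs_sub_le (hp : IsPMF p) (hq : IsPMF q) (hε : ε ≤ 1)
    (hpq : ∑ y, |p y - q y| ≤ ε) :
    |∑ y, negMulLog (p y) - ∑ y, negMulLog (q y)|
      ≤ ε * log (Fintype.card Y) + negMulLog ε + ε := by
  set δ := ∑ y, |p y - q y|
  have hδ : 0 ≤ δ := Finset.sum_nonneg fun y _ => abs_nonneg _
  have hlog : 0 ≤ log (Fintype.card Y) := log_nonneg (by exact_mod_cast Fintype.card_pos)
  calc |∑ y, negMulLog (p y) - ∑ y, negMulLog (q y)|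
      ≤ ∑ y, |negMulLog (p y) - negMulLog (q y)| := by
        rw [← Finset.sum_sub_distrib]; exact Finset.abs_sum_le_sum_abs _ _
    _ ≤ ∑ y, (negMulLog |p y - q y| + |p y - q y|) := Finset.sum_le_sum fun y _ =>
        abs_negMulLog_sub_le (hp.1 y) (hp.le_one y) (hq.1 y) (hq.le_one y)
    _ = ∑ y, negMulLog |p y - q y| + δ := Finset.sum_add_distrib
    _ ≤ δ * log (Fintype.card Y) + (negMulLog δ + δ) := by
        have := sum_negMulLog_le fun y => abs_nonneg (p y - q y)
        linarith
    _ ≤ ε * log (Fintype.card Y) + (negMulLog ε + ε) :=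
        add_le_add (mul_le_mul_of_nonneg_right hpq hlog) (negMulLog_add_self_le hδ hpq hε)
    _ = ε * log (Fintype.card Y) + negMulLog ε + ε := by ring

theorem abs_sum_negMulLog_sub_le (hp : IsPMF p) (hq : IsPMF q) (hε₀ : 0 ≤ ε) (hε₁ : ε ≤ 1)
    (hpq : ∑ y, |p y - q y| ≤ ε) :
    |∑ y, negMulLog (p y) - ∑ y, negMulLog (q y)|
      ≤ 2 * ε * log (Fintype.card Y) + 2 * binEntropy ε := by
  rcases subsingleton_or_nontrivial Y with hY | hY
  · have hpq : p = q := funext fun y => by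
      rw [← Fintype.sum_subsingleton p y, ← Fintype.sum_subsingleton q y, hp.2, hq.2]
    have hcard : Fintype.card Y = 1 :=
      le_antisymm (Fintype.card_le_one_iff_subsingleton.2 hY) Fintype.card_pos
    rw [hpq, sub_self, abs_zero, hcard, Nat.cast_one, log_one]
    linarith [binEntropy_nonneg hε₀ hε₁]
  have hlog2 : log 2 ≤ log (Fintype.card Y) :=
    log_le_log two_pos (by exact_mod_cast Fintype.one_lt_card)
  rcases le_or_gt ε 2⁻¹ with hε | hε
  · have hbin : negMulLog ε + negMulLog (1 - ε) = binEntropy ε :=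
      (binEntropy_eq_negMulLog_add_negMulLog_one_sub ε).symm
    have hnml : 0 ≤ negMulLog (1 - ε) := negMulLog_nonneg (by linarith) (by linarith)
    have hεlog : ε * log 2 ≤ negMulLog ε := by
      rcases hε₀.eq_or_lt with rfl | hε₀'
      · simp
      have : log ε ≤ -log 2 := by
        rw [← log_inv]; exact log_le_log hε₀' hε
      simp only [negMulLog]
      nlinarith
    have := abs_sum_negMulLog_sub_le_of_sum_abs_sub_le hp hq hε₁ hpq
    nlinarith [log_two_gt_d9]
  · have := hp.sum_negMulLog_nonneg
    have := hq.sum_negMulLog_nonneg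
    have := hp.sum_negMulLog_le_log_card
    have := hq.sum_negMulLog_le_log_card
    have := mul_nonneg (by linarith : 0 ≤ 2 * ε - 1) ((log_nonneg one_le_two).trans hlog2)
    rw [abs_sub_le_iff]
    constructor <;> linarith [binEntropy_nonneg hε₀ hε₁]

end Fannes

section Mixture

variable {X Y : Type*} [Fintype X] [Fintype Y] {ε : ℝ}

lemma abs_sum_negMulLog_sub_le_mul_of_sum_eq [Nonempty Y] {p q : Y → ℝ} (hp : ∀ y, 0 ≤ p y)
    (hq : ∀ y, 0 ≤ q y) (hsum : ∑ y, q y = ∑ y, p y) (hε₀ : 0 ≤ ε) (hε₁ : ε ≤ 1)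
    (hpq : ∑ y, |p y - q y| ≤ ε * ∑ y, p y) :
    |∑ y, negMulLog (p y) - ∑ y, negMulLog (q y)|
      ≤ (∑ y, p y) * (2 * ε * log (Fintype.card Y) + 2 * binEntropy ε) := by
  rcases (Finset.sum_nonneg fun y _ => hp y : 0 ≤ ∑ y, p y).eq_or_lt with hc | hc
  · have hpq' : p = q := funext fun y => by
      have h0 : ∑ y, |p y - q y| = 0 :=
        le_antisymm (by simpa [← hc] using hpq) (Finset.sum_nonneg fun y _ => abs_nonneg _)
      exact sub_eq_zero.1 (abs_eq_zero.1 ((Finset.sum_eq_zero_iff_of_nonneg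
        fun y _ => abs_nonneg (p y - q y)).1 h0 y (Finset.mem_univ y)))
    subst hpq'
    rw [sub_self, abs_zero, ← hc, zero_mul]
  have hq' : IsPMF fun y => q y / ∑ b, p b := hsum ▸ isPMF_div_sum hq (hsum ▸ hc)
  have hdist : ∑ y, |p y / ∑ b, p b - q y / ∑ b, p b| ≤ ε := by
    simp_rw [← sub_div, abs_div, abs_of_pos hc, ← Finset.sum_div]
    exact div_le_of_le_mul₀ hc.le hε₀ hpq
  rw [sum_negMulLog_eq_mul_sum_negMulLog_div_add p hc.ne',
    sum_negMulLog_eq_mul_sum_negMulLog_div_add q (hsum ▸ hc.ne'), hsum, add_sub_add_right_eq_sub,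
    ← mul_sub, abs_mul, abs_of_pos hc]
  exact mul_le_mul_of_nonneg_left
    (abs_sum_negMulLog_sub_le (isPMF_div_sum hp hc) hq' hε₀ hε₁ hdist) hc.le

lemma sum_mix_eq (w : X → ℝ) {K : X → Y → ℝ} (hK : ∀ x, IsPMF (K x)) :
    ∑ y, ∑ x, w x * K x y = ∑ x, w x := by
  rw [Finset.sum_comm]
  simp only [← Finset.mul_sum, (hK _).2, mul_one]

lemma sum_abs_mix_sub_le {w : X → ℝ} (hw : ∀ x, 0 ≤ w x) {K K' : X → Y → ℝ}
    (hKK' : ∀ x, ∑ y, |K x y - K' x y| ≤ ε) :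
    ∑ y, |∑ x, w x * K x y - ∑ x, w x * K' x y| ≤ ε * ∑ x, w x := calc
  _ ≤ ∑ y, ∑ x, w x * |K x y - K' x y| := Finset.sum_le_sum fun y _ => by
      rw [← Finset.sum_sub_distrib]
      refine (Finset.abs_sum_le_sum_abs _ _).trans_eq (Finset.sum_congr rfl fun x _ => ?_)
      rw [← mul_sub, abs_mul, abs_of_nonneg (hw x)]
  _ = ∑ x, w x * ∑ y, |K x y - K' x y| := by rw [Finset.sum_comm]; simp only [Finset.mul_sum]
  _ ≤ ∑ x, w x * ε := Finset.sum_le_sum fun x _ => mul_le_mul_of_nonneg_left (hKK' x) (hw x)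
  _ = ε * ∑ x, w x := by rw [← Finset.sum_mul, mul_comm]

theorem abs_sum_negMulLog_mix_sub_le [Nonempty Y] {G : Type*} [Fintype G] {w : G → X → ℝ}
    (hw : ∀ g x, 0 ≤ w g x) (hw₁ : ∑ g, ∑ x, w g x = 1) {K K' : X → Y → ℝ}
    (hK : ∀ x, IsPMF (K x)) (hK' : ∀ x, IsPMF (K' x)) (hε₀ : 0 ≤ ε) (hε₁ : ε ≤ 1)
    (hKK' : ∀ x, ∑ y, |K x y - K' x y| ≤ ε) :
    |∑ g, ∑ y, negMulLog (∑ x, w g x * K x y) - ∑ g, ∑ y, negMulLog (∑ x, w g x * K' x y)|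
      ≤ 2 * ε * log (Fintype.card Y) + 2 * binEntropy ε := calc
  _ ≤ ∑ g, |∑ y, negMulLog (∑ x, w g x * K x y) - ∑ y, negMulLog (∑ x, w g x * K' x y)| := by
      rw [← Finset.sum_sub_distrib]; exact Finset.abs_sum_le_sum_abs _ _
  _ ≤ ∑ g, (∑ x, w g x) * (2 * ε * log (Fintype.card Y) + 2 * binEntropy ε) :=
      Finset.sum_le_sum fun g _ => by
        have hK_nonneg : ∀ (K : X → Y → ℝ), (∀ x, IsPMF (K x)) → ∀ y, 0 ≤ ∑ x, w g x * K x y :=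
          fun K hK y => Finset.sum_nonneg fun x _ => mul_nonneg (hw g x) ((hK x).1 y)
        have h := abs_sum_negMulLog_sub_le_mul_of_sum_eq (hK_nonneg K hK) (hK_nonneg K' hK')
          (by rw [sum_mix_eq _ hK, sum_mix_eq _ hK']) hε₀ hε₁
          (by rw [sum_mix_eq _ hK]; exact sum_abs_mix_sub_le (hw g) hKK')
        rwa [sum_mix_eq _ hK] at h
  _ = _ := by rw [← Finset.sum_mul, hw₁, one_mul]

end Mixture

section ProductChannel

variable {A B X Y ι : Type*} [Fintype ι] [DecidableEq ι]

noncomputable def prodChannelLaw [Fintype X] (f : ι → X → Y → ℝ) (r : A × (ι → X) → ℝ) :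
    A × (ι → Y) → ℝ :=
  fun t => ∑ x, r (t.1, x) * ∏ i, f i (x i) (t.2 i)

lemma sum_prod_eq_one [Fintype Y] {f : ι → X → Y → ℝ} (hf : ∀ i x, IsPMF (f i x)) (x : ι → X) :
    ∑ y : ι → Y, ∏ i, f i (x i) (y i) = 1 := by
  simp [← Fintype.prod_sum, (hf _ _).2]

lemma prod_funSplitAt_symm (k : ι) (φ : ι → Y → ℝ) (yk : Y) (yr : {j // j ≠ k} → Y) :
    ∏ i, φ i ((Equiv.funSplitAt k Y).symm (yk, yr) i)
      = φ k yk * ∏ j : {j // j ≠ k}, φ j (yr j) := by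
  rw [Fintype.prod_eq_mul_prod_subtype_ne _ k]
  congr 1
  · simp
  · exact Finset.prod_congr rfl fun j _ => by simp [j.2]

lemma sum_prodChannelLaw_snd [Fintype X] [Fintype Y] {f : ι → X → Y → ℝ} (hf : ∀ i x, IsPMF (f i x))
    (r : A × (ι → X) → ℝ) (a : A) : ∑ y, prodChannelLaw f r (a, y) = ∑ x, r (a, x) := by
  simp only [prodChannelLaw]
  rw [Finset.sum_comm]
  simp only [← Finset.mul_sum, sum_prod_eq_one hf, mul_one]

lemma sum_prodChannelLaw_eq_prodChannelLaw_sum [Fintype B] [Fintype X] (f : ι → X → Y → ℝ)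
    (r : (A × B) × (ι → X) → ℝ) (a : A) (y : ι → Y) :
    ∑ b, prodChannelLaw f r ((a, b), y)
      = prodChannelLaw f (fun t => ∑ b, r ((t.1, b), t.2)) (a, y) := by
  simp only [prodChannelLaw, Finset.sum_mul]
  exact Finset.sum_comm

theorem abs_sum_negMulLog_prodChannelLaw_sub_le_of_eq_of_ne [Fintype A] [Fintype X]
    [Fintype Y] [Nonempty Y] {ε : ℝ} {f f' : ι → X → Y → ℝ} {k : ι}
    (hf : ∀ i x, IsPMF (f i x)) (hf' : ∀ i x, IsPMF (f' i x))
    (hoff : ∀ i, i ≠ k → f' i = f i) (hε₀ : 0 ≤ ε) (hε₁ : ε ≤ 1)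
    (hk : ∀ x, ∑ y, |f k x y - f' k x y| ≤ ε) {r : A × (ι → X) → ℝ} (hr : IsPMF r) :
    |∑ t, negMulLog (prodChannelLaw f r t) - ∑ t, negMulLog (prodChannelLaw f' r t)|
      ≤ 2 * ε * log (Fintype.card Y) + 2 * binEntropy ε := by
  -- Given `a` and the outputs `g.2` off `k`, output `k` is drawn from `f k (x k)`, resp.
  -- `f' k (x k)`, where `(g, x)` is distributed according to `w`.
  let w : A × ({j // j ≠ k} → Y) → (ι → X) → ℝ :=
    fun g x => r (g.1, x) * ∏ j : {j // j ≠ k}, f j (x j) (g.2 j)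
  have hsplit : ∀ F : ι → X → Y → ℝ, (∀ j : {j // j ≠ k}, F j = f j) →
      ∑ t, negMulLog (prodChannelLaw F r t)
        = ∑ g, ∑ yk, negMulLog (∑ x, w g x * F k (x k) yk) := by
    intro F hF
    rw [Fintype.sum_prod_type, Fintype.sum_prod_type]
    refine Finset.sum_congr rfl fun a _ => ?_
    rw [← (Equiv.funSplitAt k Y).symm.sum_comp, Fintype.sum_prod_type, Finset.sum_comm]
    refine Finset.sum_congr rfl fun yr _ => Finset.sum_congr rfl fun yk _ => ?_
    simp only [prodChannelLaw, prod_funSplitAt_symm, w, hF]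
    exact congrArg negMulLog (Finset.sum_congr rfl fun x _ => by ring)
  have hw : ∀ g x, 0 ≤ w g x := fun g x =>
    mul_nonneg (hr.1 _) (Finset.prod_nonneg fun j _ => (hf j (x j)).1 _)
  have hw₁ : ∑ g, ∑ x, w g x = 1 := by
    rw [Fintype.sum_prod_type, ← hr.2, Fintype.sum_prod_type]
    refine Finset.sum_congr rfl fun a _ => ?_
    rw [Finset.sum_comm]
    refine Finset.sum_congr rfl fun x _ => ?_
    simp only [w, ← Finset.mul_sum]
    rw [sum_prod_eq_one (fun j : {j // j ≠ k} => hf j) (fun j => x j), mul_one]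
  rw [hsplit f fun _ => rfl, hsplit f' fun j => hoff j j.2]
  exact abs_sum_negMulLog_mix_sub_le hw hw₁ (fun x => hf k (x k)) (fun x => hf' k (x k)) hε₀ hε₁
    fun x => hk (x k)

theorem abs_sum_negMulLog_prodChannelLaw_sub_le [Fintype A] [Fintype X] [Fintype Y]
    [Nonempty Y] {ε : ℝ} {W W' : X → Y → ℝ}
    (hW : ∀ x, IsPMF (W x)) (hW' : ∀ x, IsPMF (W' x)) (hε₀ : 0 ≤ ε) (hε₁ : ε ≤ 1)
    (hd : ∀ x, ∑ y, |W x y - W' x y| ≤ ε) {r : A × (ι → X) → ℝ} (hr : IsPMF r) :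
    |∑ t, negMulLog (prodChannelLaw (fun _ => W) r t)
        - ∑ t, negMulLog (prodChannelLaw (fun _ => W') r t)|
      ≤ Fintype.card ι * (2 * ε * log (Fintype.card Y) + 2 * binEntropy ε) := by
  set c := 2 * ε * log (Fintype.card Y) + 2 * binEntropy ε
  let hybrid : Finset ι → ι → X → Y → ℝ := fun S i => if i ∈ S then W' else W
  have hhybrid : ∀ S i x, IsPMF (hybrid S i x) := fun S i x => by
    dsimp only [hybrid]; split_ifs; exacts [hW' x, hW x]
  have key : ∀ S : Finset ι, |∑ t, negMulLog (prodChannelLaw (hybrid ∅) r t)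
      - ∑ t, negMulLog (prodChannelLaw (hybrid S) r t)| ≤ S.card * c := by
    intro S
    induction S using Finset.induction_on with
    | empty => simp
    | insert k S hk ih =>
      have step := abs_sum_negMulLog_prodChannelLaw_sub_le_of_eq_of_ne (k := k) (hhybrid S)
        (hhybrid (insert k S)) (fun i hi => by simp [hybrid, hi]) hε₀ hε₁
        (fun x => by simpa [hybrid, hk] using hd x) hr
      rw [Finset.card_insert_of_notMem hk, Nat.cast_succ, add_one_mul]
      exact (abs_sub_le _ _ _).trans (add_le_add ih step)
  simpa [hybrid] using key Finset.univ

theorem abs_ent_prodChannelLaw_sub_le [Fintype A] [Fintype X] [Fintype Y] [Nonempty Y]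
    {ε : ℝ} {W W' : X → Y → ℝ}
    (hW : ∀ x, IsPMF (W x)) (hW' : ∀ x, IsPMF (W' x)) (hε₀ : 0 ≤ ε) (hε₁ : ε ≤ 1)
    (hd : ∀ x, ∑ y, |W x y - W' x y| ≤ ε) {r : A × (ι → X) → ℝ} (hr : IsPMF r) :
    |ent (prodChannelLaw (fun _ => W) r) - ent (prodChannelLaw (fun _ => W') r)|
      ≤ Fintype.card ι * (2 * ε * logb 2 (Fintype.card Y) + 2 * H2 ε) := by
  have hl : 0 < log 2 := log_pos one_lt_two
  rw [ent_eq_sum_negMulLog_div, ent_eq_sum_negMulLog_div, ← sub_div, abs_div, abs_of_pos hl,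
    div_le_iff₀ hl, H2_eq_binEntropy_div, logb]
  refine (abs_sum_negMulLog_prodChannelLaw_sub_le hW hW' hε₀ hε₁ hd hr).trans_eq ?_
  field_simp

end ProductChannel

lemma ent_comp_prodAssoc {α β γ : Type*} [Fintype α] [Fintype β] [Fintype γ]
    (p : (α × β) × γ → ℝ) : ent (fun t : α × β × γ => p ((t.1, t.2.1), t.2.2)) = ent p := by
  simp only [ent]
  exact congrArg Neg.neg ((Equiv.prodAssoc α β γ).symm.sum_comp fun t => p t * logb 2 (p t))

lemma condMI_sub_condMI {α β γ : Type*} [Fintype α] [Fintype β] [Fintype γ]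
    {p q : α × β × γ → ℝ} (h : ∀ a b, ∑ c, p (a, b, c) = ∑ c, q (a, b, c)) :
    condMI p - condMI q
      = (ent (fun x : α × γ => ∑ b, p (x.1, b, x.2)) - ent fun x : α × γ => ∑ b, q (x.1, b, x.2))
        - (ent p - ent q) := by
  simp only [condMI, h]
  ring

theorem abs_condMI_prodChannelLaw_sub_le {A B X Y ι : Type*} [Fintype A] [Fintype B]
    [Fintype X] [Fintype Y] [Nonempty Y] [Fintype ι] [DecidableEq ι] {ε : ℝ}
    {W W' : X → Y → ℝ} (hW : ∀ x, IsPMF (W x)) (hW' : ∀ x, IsPMF (W' x)) (hε₀ : 0 ≤ ε)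
    (hε₁ : ε ≤ 1) (hd : ∀ x, ∑ y, |W x y - W' x y| ≤ ε) {r : (A × B) × (ι → X) → ℝ}
    (hr : IsPMF r) :
    |condMI (fun t : A × B × (ι → Y) => prodChannelLaw (fun _ => W) r ((t.1, t.2.1), t.2.2))
        - condMI fun t => prodChannelLaw (fun _ => W') r ((t.1, t.2.1), t.2.2)|
      ≤ Fintype.card ι * (4 * ε * logb 2 (Fintype.card Y) + 4 * H2 ε) := by
  have hr₁ : IsPMF fun t : A × (ι → X) => ∑ b, r ((t.1, b), t.2) :=
    ⟨fun t => Finset.sum_nonneg fun b _ => hr.1 _, by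
      rw [← hr.2, Fintype.sum_prod_type, Fintype.sum_prod_type, Fintype.sum_prod_type]
      exact Finset.sum_congr rfl fun a _ => Finset.sum_comm⟩
  rw [condMI_sub_condMI fun a b => (sum_prodChannelLaw_snd (fun _ => hW) r (a, b)).trans
      (sum_prodChannelLaw_snd (fun _ => hW') r (a, b)).symm,
    ent_comp_prodAssoc (prodChannelLaw (fun _ => W) r),
    ent_comp_prodAssoc (prodChannelLaw (fun _ => W') r)]
  simp only [sum_prodChannelLaw_eq_prodChannelLaw_sum]
  have h₁ := abs_ent_prodChannelLaw_sub_le hW hW' hε₀ hε₁ hd hr₁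
  have h₂ := abs_ent_prodChannelLaw_sub_le hW hW' hε₀ hε₁ hd hr
  calc _ ≤ _ := abs_sub _ _
    _ ≤ _ := add_le_add h₁ h₂
    _ = _ := by ring

theorem mutual_information_continuity_general
    {X Y U V : Type*} [Fintype X] [Fintype Y] [Fintype U] [Fintype V]
    [Nonempty Y] [Nonempty U]
    (ε : ℝ) (hε : ε ∈ Set.Ioo (0 : ℝ) 1)
    (W W' : X → Y → ℝ) (hW : ∀ x, IsPMF (W x)) (hW' : ∀ x, IsPMF (W' x))
    (hd : ∀ x, ∑ y, |W x y - W' x y| ≤ ε)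
    (n : ℕ) (PVU : U → V → ℝ) (E : V → (Fin n → X) → ℝ)
    (hPVU : ∀ u, IsPMF (PVU u)) (hE : ∀ v, IsPMF (E v))
    (P P' : U × V × (Fin n → Y) → ℝ)
    (hP : P = fun t => ∑ x : Fin n → X,
        (∏ i : Fin n, W (x i) (t.2.2 i)) * E t.2.1 x * PVU t.1 t.2.1 * (Fintype.card U : ℝ)⁻¹)
    (hP' : P' = fun t => ∑ x : Fin n → X,
        (∏ i : Fin n, W' (x i) (t.2.2 i)) * E t.2.1 x * PVU t.1 t.2.1 * (Fintype.card U : ℝ)⁻¹) :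
    |condMI P - condMI P'| ≤ n * (4 * ε * Real.logb 2 (Fintype.card Y) + 4 * H2 ε) := by
  let r : (U × V) × (Fin n → X) → ℝ :=
    fun t => (Fintype.card U : ℝ)⁻¹ * PVU t.1.1 t.1.2 * E t.1.2 t.2
  have hr : IsPMF r := ((isPMF_uniform U).compProd hPVU).compProd fun t => hE t.2
  have hlaw : ∀ K : X → Y → ℝ, (fun t : U × V × (Fin n → Y) => ∑ x : Fin n → X,
      (∏ i : Fin n, K (x i) (t.2.2 i)) * E t.2.1 x * PVU t.1 t.2.1 * (Fintype.card U : ℝ)⁻¹)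
        = fun t => prodChannelLaw (fun _ => K) r ((t.1, t.2.1), t.2.2) := fun K =>
    funext fun t => Finset.sum_congr rfl fun x _ => by ring
  rw [hP, hP', hlaw, hlaw]
  simpa using abs_condMI_prodChannelLaw_sub_le hW hW' hε.1.le hε.2.le hd hr

/-- continuity of conditional mutual information for memoryless
channel extensions with input generated via the Markov chain U — V — Xⁿ
(uniform `P_U`). -/
theorem mutual_information_continuity
    {X Y U V : Type*} [Fintype X] [Fintype Y] [Fintype U] [Fintype V]
    [Nonempty X] [Nonempty Y] [Nonempty U] [Nonempty V]
    (ε : ℝ) (hε : ε ∈ Set.Ioo (0 : ℝ) 1)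
    (W W' : X → Y → ℝ) (hW : ∀ x, IsPMF (W x)) (hW' : ∀ x, IsPMF (W' x))
    (hd : ∀ x, ∑ y, |W x y - W' x y| ≤ ε)
    (n : ℕ) (PVU : U → V → ℝ) (E : V → (Fin n → X) → ℝ)
    (hPVU : ∀ u, IsPMF (PVU u)) (hE : ∀ v, IsPMF (E v))
    (P P' : U × V × (Fin n → Y) → ℝ)
    (hP : P = fun t => ∑ x : Fin n → X,
        (∏ i : Fin n, W (x i) (t.2.2 i)) * E t.2.1 x * PVU t.1 t.2.1 * (Fintype.card U : ℝ)⁻¹)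
    (hP' : P' = fun t => ∑ x : Fin n → X,
        (∏ i : Fin n, W' (x i) (t.2.2 i)) * E t.2.1 x * PVU t.1 t.2.1 * (Fintype.card U : ℝ)⁻¹) :
    |condMI P - condMI P'| ≤ n * (4 * ε * Real.logb 2 (Fintype.card Y) + 4 * H2 ε) :=
  mutual_information_continuity_general ε hε W W' hW hW' hd n PVU E hPVU hE P P' hP hP'
end

section
/- Let 𝔚₁, 𝔚₂ be compound BCCs over finite alphabets 𝒳, 𝒴, 𝒵 with finite state sets S₁, S₂, and suppose the compound-channel distance satisfies D(𝔚₁,𝔚₂) ≤ ε for ε ∈ (0,1). Fix n ∈ ℕ and random variables U—V—Xⁿ. Let A₀(i) := (1/n) min_{s∈Sᵢ} min{I(U;Yⁿ_s), I(U;Zⁿ_s)} for i = 1,2. Then |A₀(1) − A₀(2)| ≤ 4H₂(ε) + 4ε·max{log|𝒴|, log|𝒵|}. -/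
open Finset Real

/-- Mutual information `I(A ; B)` for a joint distribution on `α × β`. -/
noncomputable def MI {α β : Type*} [Fintype α] [Fintype β] (p : α × β → ℝ) : ℝ :=
  ent (fun a => ∑ b, p (a, b)) + ent (fun b => ∑ a, p (a, b)) - ent p

/-- Joint distribution of `(U, Yⁿ)` when `Xⁿ` is generated via `U — V — Xⁿ`
and sent through the memoryless extension of the channel `Ch`. -/
noncomputable def PUOut {U V X Y : Type*} [Fintype V] [Fintype X]
    (n : ℕ) (Ch : X → Y → ℝ) (PU : U → ℝ) (PVU : U → V → ℝ)
    (E : V → (Fin n → X) → ℝ) : U × (Fin n → Y) → ℝ :=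
  fun t => ∑ v, ∑ x : Fin n → X, (∏ i : Fin n, Ch (x i) (t.2 i)) * E v x * PVU t.1 v * PU t.1

/-- Joint distribution of `(U, V, Yⁿ)` when `Xⁿ` is generated via `U — V — Xⁿ`
and sent through the memoryless extension of the channel `Ch`. -/
noncomputable def PUVOut {U V X Y : Type*} [Fintype X]
    (n : ℕ) (Ch : X → Y → ℝ) (PU : U → ℝ) (PVU : U → V → ℝ)
    (E : V → (Fin n → X) → ℝ) : U × V × (Fin n → Y) → ℝ :=
  fun t => ∑ x : Fin n → X, (∏ i : Fin n, Ch (x i) (t.2.2 i)) * E t.2.1 x * PVU t.1 t.2.1 * PU t.1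

/-!
Everything reduces to continuity of Shannon entropy. A Fannes-type inequality bounds
`|H(p) - H(q)|` by `2 H₂(ε) + 2 ε log |𝒜|` when `‖p - q‖₁ ≤ ε`; applied conditionally on side
information `W`, it bounds the change of `H(W, Y)` when a channel `X → Y` is replaced by an
`ε`-close one. Replacing the `n` letters of a memoryless channel one at a time costs `n` times
this, and since the law of `U` does not depend on the channel, `I(U; Yⁿ) = H(U) + H(Yⁿ) - H(U, Yⁿ)`
moves by at most twice as much. Finally `⨅ₛ min (aₛ, bₛ)` is `1`-Lipschitz for the Hausdorff-type
distance between the families of pairs `(aₛ, bₛ)`.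
-/

lemma ciInf_le_ciInf_add {ι κ : Type*} [Finite ι] [Nonempty κ] {f : ι → ℝ} {g : κ → ℝ} {c : ℝ}
    (h : ∀ k, ∃ i, f i ≤ g k + c) : ⨅ i, f i ≤ (⨅ k, g k) + c := by
  rw [← sub_le_iff_le_add]
  refine le_ciInf fun k => ?_
  obtain ⟨i, hi⟩ := h k
  linarith [ciInf_le (Set.finite_range f).bddBelow i]

lemma abs_ciInf_sub_ciInf_le {ι κ : Type*} [Finite ι] [Finite κ] [Nonempty ι] [Nonempty κ]
    {f : ι → ℝ} {g : κ → ℝ} {c : ℝ} (h₁ : ∀ k, ∃ i, |f i - g k| ≤ c)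
    (h₂ : ∀ i, ∃ k, |f i - g k| ≤ c) : |(⨅ i, f i) - ⨅ k, g k| ≤ c := by
  have hfg : ⨅ i, f i ≤ (⨅ k, g k) + c := ciInf_le_ciInf_add fun k =>
    (h₁ k).imp fun i hi => by linarith [le_abs_self (f i - g k)]
  have hgf : ⨅ k, g k ≤ (⨅ i, f i) + c := ciInf_le_ciInf_add fun i =>
    (h₂ i).imp fun k hk => by linarith [neg_abs_le (f i - g k)]
  exact abs_sub_le_iff.2 ⟨by linarith, by linarith⟩

lemma abs_ciInf_min_sub_ciInf_min_le {ι κ : Type*} [Finite ι] [Finite κ] [Nonempty ι]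
    [Nonempty κ] {f₁ g₁ : ι → ℝ} {f₂ g₂ : κ → ℝ} {c : ℝ}
    (hf₁ : ∀ k, ∃ i, |f₁ i - f₂ k| ≤ c) (hf₂ : ∀ i, ∃ k, |f₁ i - f₂ k| ≤ c)
    (hg₁ : ∀ k, ∃ i, |g₁ i - g₂ k| ≤ c) (hg₂ : ∀ i, ∃ k, |g₁ i - g₂ k| ≤ c) :
    |(⨅ i, min (f₁ i) (g₁ i)) - ⨅ k, min (f₂ k) (g₂ k)| ≤ c := by
  rw [ciInf_inf_eq (Set.finite_range _).bddBelow (Set.finite_range _).bddBelow,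
    ciInf_inf_eq (Set.finite_range _).bddBelow (Set.finite_range _).bddBelow]
  exact (abs_min_sub_min_le_max _ _ _ _).trans
    (max_le (abs_ciInf_sub_ciInf_le hf₁ hf₂) (abs_ciInf_sub_ciInf_le hg₁ hg₂))

noncomputable def negMulLogb (x : ℝ) : ℝ := negMulLog x / log 2

lemma negMulLogb_eq (x : ℝ) : negMulLogb x = -(x * logb 2 x) := by
  rw [negMulLogb, negMulLog, logb]; ring

@[simp] lemma negMulLogb_zero : negMulLogb 0 = 0 := by simp [negMulLogb]

@[simp] lemma negMulLogb_one : negMulLogb 1 = 0 := by simp [negMulLogb]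

lemma negMulLogb_nonneg {x : ℝ} (h0 : 0 ≤ x) (h1 : x ≤ 1) : 0 ≤ negMulLogb x :=
  div_nonneg (negMulLog_nonneg h0 h1) (log_nonneg one_le_two)

lemma negMulLogb_mul (x y : ℝ) : negMulLogb (x * y) = y * negMulLogb x + x * negMulLogb y := by
  simp only [negMulLogb, negMulLog_mul]; ring

lemma negMulLogb_add_le {x y : ℝ} (hx : 0 ≤ x) (hy : 0 ≤ y) :
    negMulLogb (x + y) ≤ negMulLogb x + negMulLogb y := by
  rcases hx.eq_or_lt with rfl | hx
  · simp
  rcases hy.eq_or_lt with rfl | hy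
  · simp
  have hlx := logb_le_logb_of_le one_lt_two hx (le_add_of_nonneg_right hy.le)
  have hly := logb_le_logb_of_le one_lt_two hy (le_add_of_nonneg_left hx.le)
  simp only [negMulLogb_eq]
  nlinarith

lemma concaveOn_negMulLogb : ConcaveOn ℝ (Set.Ici 0) negMulLogb := by
  have h : negMulLogb = fun x => (log 2)⁻¹ • negMulLog x := by
    ext x; rw [negMulLogb, smul_eq_mul, inv_mul_eq_div]
  rw [h]
  exact concaveOn_negMulLog.smul (by positivity)

/-- On `[0, 1/2]` the slope `-(log₂ x + log₂ e)` of `negMulLogb` is at least `-1`. -/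
lemma negMulLogb_le_add_sub {s t : ℝ} (ht : 0 ≤ t) (hts : t ≤ s) (hs : s ≤ 1 / 2) :
    negMulLogb t ≤ negMulLogb s + (s - t) := by
  rcases ht.eq_or_lt with rfl | ht
  · have := negMulLogb_nonneg hts (by linarith)
    simp only [negMulLogb_zero]; linarith
  have hs0 : 0 < s := ht.trans_le hts
  have hl2 : 1 / 2 < log 2 := by have := log_two_gt_d9; linarith
  have hlogs : log s ≤ -log 2 := by
    rw [← log_inv]; exact log_le_log hs0 (by linarith)
  have hgibbs : t * (log s - log t) ≤ s - t := by
    rw [← log_div hs0.ne' ht.ne']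
    calc t * log (s / t) ≤ t * (s / t - 1) :=
          mul_le_mul_of_nonneg_left (log_le_sub_one_of_pos (by positivity)) ht.le
      _ = s - t := by field_simp
  have key : negMulLog t ≤ negMulLog s + (s - t) * log 2 := by
    simp only [negMulLog]
    nlinarith [mul_le_mul_of_nonneg_left hlogs (sub_nonneg.2 hts)]
  rw [negMulLogb, negMulLogb, div_add' _ _ _ (log_pos one_lt_two).ne']
  exact div_le_div_of_nonneg_right key (log_pos one_lt_two).le

/-- Chord of the convex function `x log x` between `1` and `3/2`, and `(3/2)³ ≤ 2²`. -/
lemma one_add_mul_logb_one_add_le {t : ℝ} (ht : 0 ≤ t) (ht2 : t ≤ 1 / 2) :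
    (1 + t) * logb 2 (1 + t) ≤ 2 * t := by
  have hchord := convexOn_mul_log.2 (Set.mem_Ici.2 zero_le_one)
    (Set.mem_Ici.2 (by norm_num : (0 : ℝ) ≤ 3 / 2)) (by linarith : 0 ≤ 1 - 2 * t)
    (by linarith : 0 ≤ 2 * t) (by ring)
  have hpt : (1 - 2 * t) * 1 + 2 * t * (3 / 2) = 1 + t := by ring
  simp only [smul_eq_mul, log_one, mul_zero, zero_add, hpt] at hchord
  have hcube : 3 * log (3 / 2) ≤ 2 * log 2 := by
    have := log_le_log (by norm_num) (by norm_num : ((3 : ℝ) / 2) ^ 3 ≤ 2 ^ 2)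
    rwa [log_pow, log_pow] at this
  rw [logb, ← mul_div_assoc, div_le_iff₀ (log_pos one_lt_two)]
  nlinarith

section Entropy

variable {α : Type*} [Fintype α]

lemma ent_eq_sum_negMulLogb (p : α → ℝ) : ent p = ∑ a, negMulLogb (p a) := by
  simp [ent, negMulLogb_eq, sum_neg_distrib]

lemma ent_comp_equiv {β : Type*} [Fintype β] (e : β ≃ α) (p : α → ℝ) :
    ent (fun b => p (e b)) = ent p := by
  simp only [ent_eq_sum_negMulLogb]
  exact e.sum_comp fun a => negMulLogb (p a)

lemma H2_eq (e : ℝ) : H2 e = negMulLogb e + negMulLogb (1 - e) := by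
  simp only [H2, negMulLogb_eq]; ring

lemma H2_nonneg {e : ℝ} (h0 : 0 ≤ e) (h1 : e ≤ 1) : 0 ≤ H2 e := by
  rw [H2_eq]
  exact add_nonneg (negMulLogb_nonneg h0 h1) (negMulLogb_nonneg (by linarith) (by linarith))

lemma logb_card_nonneg : 0 ≤ logb 2 (Fintype.card α) := by
  rcases (Fintype.card α).eq_zero_or_pos with h | h
  · simp [h]
  · exact logb_nonneg one_lt_two (by exact_mod_cast h)

lemma one_le_logb_card [Nontrivial α] : 1 ≤ logb 2 (Fintype.card α) := by
  rw [le_logb_iff_rpow_le one_lt_two (by exact_mod_cast Fintype.card_pos), rpow_one]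
  exact_mod_cast Fintype.one_lt_card

lemma IsPMF.eq_of_subsingleton [Subsingleton α] {p q : α → ℝ} (hp : IsPMF p) (hq : IsPMF q) :
    p = q := by
  funext a
  rw [← Fintype.sum_subsingleton p a, ← Fintype.sum_subsingleton q a, hp.2, hq.2]

lemma sum_negMulLogb_mul {p : α → ℝ} (hp : IsPMF p) (m : ℝ) :
    ∑ a, negMulLogb (m * p a) = m * ent p + negMulLogb m := by
  simp only [negMulLogb_mul, sum_add_distrib, ← sum_mul, ← mul_sum, hp.2, ent_eq_sum_negMulLogb]
  ring

/-- Rescaled form of `negMulLog_le_one_sub_self`. -/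
lemma negMulLog_le_sub_sub_mul_log {x c : ℝ} (hx : 0 ≤ x) (hc : 0 < c) :
    negMulLog x ≤ c - x - x * log c := by
  have h := negMulLog_le_one_sub_self (div_nonneg hx hc.le)
  have e : negMulLog x = c * negMulLog (x / c) - x * log c := by
    conv_lhs => rw [← mul_div_cancel₀ x hc.ne', negMulLog_mul]
    simp only [negMulLog]; field_simp; ring
  rw [e]
  nlinarith [mul_le_mul_of_nonneg_left h hc.le, mul_div_cancel₀ x hc.ne']

lemma sum_negMulLog_le {f : α → ℝ} (hf : ∀ a, 0 ≤ f a) :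
    ∑ a, negMulLog (f a) ≤ negMulLog (∑ a, f a) + (∑ a, f a) * log (Fintype.card α) := by
  set m := ∑ a, f a with hm_def
  rcases (sum_nonneg fun a _ => hf a : 0 ≤ m).eq_or_lt with hm | hm
  · have hf0 : ∀ a, f a = 0 := fun a =>
      (sum_eq_zero_iff_of_nonneg fun a _ => hf a).1 hm.symm a (mem_univ a)
    simp [hf0, hm_def]
  obtain ⟨a₀, -, -⟩ := exists_ne_zero_of_sum_ne_zero hm.ne'
  have hN : (0 : ℝ) < Fintype.card α := by
    exact_mod_cast Fintype.card_pos_iff.2 ⟨a₀⟩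
  calc ∑ a, negMulLog (f a)
      ≤ ∑ a, (m / Fintype.card α - f a - f a * log (m / Fintype.card α)) :=
        sum_le_sum fun a _ => negMulLog_le_sub_sub_mul_log (hf a) (by positivity)
    _ = negMulLog m + m * log (Fintype.card α) := by
        rw [sum_sub_distrib, sum_sub_distrib, ← sum_mul, sum_const, card_univ, nsmul_eq_mul,
          ← hm_def, log_div hm.ne' hN.ne', negMulLog]
        field_simp
        ring

lemma sum_negMulLogb_le {f : α → ℝ} (hf : ∀ a, 0 ≤ f a) :
    ∑ a, negMulLogb (f a) ≤ negMulLogb (∑ a, f a) + (∑ a, f a) * logb 2 (Fintype.card α) := by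
  simp only [negMulLogb, logb, ← sum_div, mul_div_assoc', ← add_div]
  exact div_le_div_of_nonneg_right (sum_negMulLog_le hf) (log_pos one_lt_two).le

/-- Concavity of `negMulLogb` at `(p + s) / (1 + t) = (1 + t)⁻¹ p + (t / (1 + t)) (s / t)`. -/
lemma ent_add_negMulLogb_le {p s : α → ℝ} (hp : IsPMF p) (hs : ∀ a, 0 ≤ s a) {t : ℝ}
    (hst : ∑ a, s a = t) : ent p + negMulLogb (1 + t) ≤ ∑ a, negMulLogb (p a + s a) := by
  rcases (hst ▸ sum_nonneg fun a _ => hs a : 0 ≤ t).eq_or_lt with rfl | ht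
  · have hs0 : ∀ a, s a = 0 := fun a =>
      (sum_eq_zero_iff_of_nonneg fun a _ => hs a).1 hst a (mem_univ a)
    simp [hs0, ent_eq_sum_negMulLogb]
  set z : α → ℝ := fun a => (p a + s a) / (1 + t)
  have hz : ∀ a, p a + s a = (1 + t) * z a := fun a => by simp only [z]; field_simp
  have hzP : IsPMF z := by
    refine ⟨fun a => by positivity [hp.1 a, hs a], ?_⟩
    simp only [z, ← sum_div, sum_add_distrib, hp.2, hst]
    field_simp
  have hconc : (1 + t)⁻¹ * ent p ≤ ent z := by
    rw [ent_eq_sum_negMulLogb, ent_eq_sum_negMulLogb, mul_sum]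
    refine sum_le_sum fun a _ => ?_
    have hsa : s a / t ≤ 1 :=
      div_le_one_of_le₀ (hst ▸ single_le_sum (fun b _ => hs b) (mem_univ a)) ht.le
    have hcomb : (1 + t)⁻¹ * p a + t / (1 + t) * (s a / t) = z a := by simp only [z]; field_simp
    calc (1 + t)⁻¹ * negMulLogb (p a)
        ≤ (1 + t)⁻¹ * negMulLogb (p a) + t / (1 + t) * negMulLogb (s a / t) :=
          le_add_of_nonneg_right (mul_nonneg (by positivity)
            (negMulLogb_nonneg (div_nonneg (hs a) ht.le) hsa))
      _ ≤ negMulLogb (z a) := hcomb ▸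
          concaveOn_negMulLogb.2 (Set.mem_Ici.2 (hp.1 a)) (Set.mem_Ici.2 (by positivity [hs a]))
            (by positivity) (by positivity) (by field_simp)
  calc ent p + negMulLogb (1 + t) = (1 + t) * ((1 + t)⁻¹ * ent p) + negMulLogb (1 + t) := by
        field_simp
    _ ≤ (1 + t) * ent z + negMulLogb (1 + t) := by gcongr
    _ = ∑ a, negMulLogb (p a + s a) := by simp only [hz, sum_negMulLogb_mul hzP]

lemma fannes_correction_le {t ε L : ℝ} (ht : 0 ≤ t) (htε : 2 * t ≤ ε) (hε : ε ≤ 1)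
    (hL : 1 ≤ L) : t * L + negMulLogb t - negMulLogb (1 + t) ≤ 2 * H2 ε + 2 * ε * L := by
  have h1 : -negMulLogb (1 + t) ≤ 2 * t := by
    rw [negMulLogb_eq, neg_neg]; exact one_add_mul_logb_one_add_le ht (by linarith)
  have h2 := negMulLogb_le_add_sub ht (by linarith : t ≤ ε / 2) (by linarith)
  have h3 : negMulLogb (ε / 2) = negMulLogb ε / 2 + ε / 2 := by
    have : negMulLogb (1 / 2) = 1 / 2 := by
      rw [negMulLogb_eq, one_div, logb_inv, logb_self_eq_one one_lt_two]; ring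
    rw [div_eq_mul_one_div ε, negMulLogb_mul, this]; ring
  have h4 : negMulLogb ε ≤ H2 ε := by
    rw [H2_eq]; linarith [negMulLogb_nonneg (by linarith : 0 ≤ 1 - ε) (by linarith)]
  have h5 := negMulLogb_nonneg (by linarith : 0 ≤ ε) hε
  nlinarith [mul_le_mul_of_nonneg_left hL (by linarith : 0 ≤ 2 * ε - t)]

lemma sum_posPart_sub_comm {p q : α → ℝ} (h : ∑ a, p a = ∑ a, q a) :
    ∑ a, (q a - p a)⁺ = ∑ a, (p a - q a)⁺ := by
  have hpart : ∀ a, (p a - q a)⁺ - (q a - p a)⁺ = p a - q a := fun a => by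
    rw [← neg_sub (p a), posPart_neg, posPart_sub_negPart]
  have := sum_congr rfl fun a (_ : a ∈ univ) => hpart a
  rw [sum_sub_distrib, sum_sub_distrib, h] at this
  linarith

lemma two_mul_sum_posPart_sub {p q : α → ℝ} (h : ∑ a, p a = ∑ a, q a) :
    2 * ∑ a, (p a - q a)⁺ = ∑ a, |p a - q a| := by
  simp only [← posPart_add_negPart, ← posPart_neg, neg_sub, sum_add_distrib,
    sum_posPart_sub_comm h]
  ring

/-- `max p q = p + (q - p)⁺ = q + (p - q)⁺` has mass `1 + t` with `t = ‖p - q‖₁ / 2`: concavity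
bounds its entropy from below by `H(p)`, subadditivity from above by `H(q)` plus the entropy
of `(p - q)⁺`. -/
lemma ent_sub_ent_le {p q : α → ℝ} (hp : IsPMF p) (hq : IsPMF q) {ε : ℝ} (hε0 : 0 ≤ ε)
    (hε1 : ε ≤ 1) (hpq : ∑ a, |p a - q a| ≤ ε) :
    ent p - ent q ≤ 2 * H2 ε + 2 * ε * logb 2 (Fintype.card α) := by
  rcases subsingleton_or_nontrivial α with hα | hα
  · rw [hp.eq_of_subsingleton hq, sub_self]
    have := H2_nonneg hε0 hε1
    have := mul_nonneg hε0 (logb_card_nonneg (α := α))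
    linarith
  have hsum : ∑ a, p a = ∑ a, q a := by rw [hp.2, hq.2]
  have hmax : ∀ a, p a + (q a - p a)⁺ = q a + (p a - q a)⁺ := fun a => by
    rw [← sup_eq_add_posPart_sub, ← sup_eq_add_posPart_sub, sup_comm]
  have lower := ent_add_negMulLogb_le hp (fun a => posPart_nonneg (q a - p a))
    (sum_posPart_sub_comm hsum)
  have upper : ∑ a, negMulLogb (q a + (p a - q a)⁺)
      ≤ ent q + (negMulLogb (∑ a, (p a - q a)⁺)
        + (∑ a, (p a - q a)⁺) * logb 2 (Fintype.card α)) := by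
    rw [ent_eq_sum_negMulLogb]
    calc ∑ a, negMulLogb (q a + (p a - q a)⁺)
        ≤ ∑ a, (negMulLogb (q a) + negMulLogb (p a - q a)⁺) :=
          sum_le_sum fun a _ => negMulLogb_add_le (hq.1 a) (posPart_nonneg _)
      _ ≤ _ := by
          rw [sum_add_distrib]
          exact add_le_add_right (sum_negMulLogb_le fun a => posPart_nonneg (p a - q a)) _
  simp only [hmax] at lower
  have hcorr := fannes_correction_le (sum_nonneg fun a _ => posPart_nonneg (p a - q a))
    ((two_mul_sum_posPart_sub hsum).trans_le hpq) hε1 (one_le_logb_card (α := α))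
  linarith

lemma abs_ent_sub_ent_le {p q : α → ℝ} (hp : IsPMF p) (hq : IsPMF q) {ε : ℝ} (hε0 : 0 ≤ ε)
    (hε1 : ε ≤ 1) (hpq : ∑ a, |p a - q a| ≤ ε) :
    |ent p - ent q| ≤ 2 * H2 ε + 2 * ε * logb 2 (Fintype.card α) :=
  abs_sub_le_iff.2 ⟨ent_sub_ent_le hp hq hε0 hε1 hpq,
    ent_sub_ent_le hq hp hε0 hε1 (by simpa only [abs_sub_comm] using hpq)⟩

end Entropy

section Channel

variable {W X Y : Type*} [Fintype W] [Fintype X] [Fintype Y]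

lemma abs_sum_negMulLogb_sub_le {f g : Y → ℝ} (hf : ∀ y, 0 ≤ f y) (hg : ∀ y, 0 ≤ g y) {m : ℝ}
    (hfm : ∑ y, f y = m) (hgm : ∑ y, g y = m) {ε : ℝ} (hε0 : 0 ≤ ε) (hε1 : ε ≤ 1)
    (hd : ∑ y, |f y - g y| ≤ ε * m) :
    |∑ y, negMulLogb (f y) - ∑ y, negMulLogb (g y)|
      ≤ m * (2 * H2 ε + 2 * ε * logb 2 (Fintype.card Y)) := by
  rcases (hfm ▸ sum_nonneg fun y _ => hf y : 0 ≤ m).eq_or_lt with rfl | hm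
  · have hf0 : ∀ y, f y = 0 := fun y =>
      (sum_eq_zero_iff_of_nonneg fun y _ => hf y).1 hfm y (mem_univ y)
    have hg0 : ∀ y, g y = 0 := fun y =>
      (sum_eq_zero_iff_of_nonneg fun y _ => hg y).1 hgm y (mem_univ y)
    simp [hf0, hg0]
  have hp : IsPMF fun y => f y / m :=
    ⟨fun y => div_nonneg (hf y) hm.le, by rw [← sum_div, hfm, div_self hm.ne']⟩
  have hq : IsPMF fun y => g y / m :=
    ⟨fun y => div_nonneg (hg y) hm.le, by rw [← sum_div, hgm, div_self hm.ne']⟩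
  have hpq : ∑ y, |f y / m - g y / m| ≤ ε := by
    simp only [← sub_div, abs_div, abs_of_pos hm, ← sum_div]
    exact (div_le_iff₀ hm).2 hd
  have hscale : ∀ h : Y → ℝ, ∑ y, negMulLogb (h y) = ∑ y, negMulLogb (m * (h y / m)) :=
    fun h => by simp only [mul_div_cancel₀ _ hm.ne']
  rw [hscale f, hscale g, sum_negMulLogb_mul hp, sum_negMulLogb_mul hq, add_sub_add_right_eq_sub,
    ← mul_sub, abs_mul, abs_of_pos hm]
  exact mul_le_mul_of_nonneg_left (abs_ent_sub_ent_le hp hq hε0 hε1 hpq) hm.le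

/-- Conditionally on each `w`, this is `abs_sum_negMulLogb_sub_le`, weighted by the mass of `w`. -/
lemma abs_ent_sub_ent_le_of_channel {R : W × X → ℝ} (hR : IsPMF R) {C₁ C₂ : X → Y → ℝ}
    (hC₁ : ∀ x, IsPMF (C₁ x)) (hC₂ : ∀ x, IsPMF (C₂ x)) {ε : ℝ} (hε0 : 0 ≤ ε) (hε1 : ε ≤ 1)
    (hd : ∀ x, ∑ y, |C₁ x y - C₂ x y| ≤ ε) :
    |ent (fun t : W × Y => ∑ x, R (t.1, x) * C₁ x t.2)
      - ent (fun t : W × Y => ∑ x, R (t.1, x) * C₂ x t.2)|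
      ≤ 2 * H2 ε + 2 * ε * logb 2 (Fintype.card Y) := by
  set B := 2 * H2 ε + 2 * ε * logb 2 (Fintype.card Y)
  have hmarg : ∀ C : X → Y → ℝ, (∀ x, IsPMF (C x)) →
      ∀ w, ∑ y, ∑ x, R (w, x) * C x y = ∑ x, R (w, x) := fun C hC w => by
    rw [sum_comm]; simp only [← mul_sum, (hC _).2, mul_one]
  have hfiber : ∀ w, |∑ y, negMulLogb (∑ x, R (w, x) * C₁ x y)
      - ∑ y, negMulLogb (∑ x, R (w, x) * C₂ x y)| ≤ (∑ x, R (w, x)) * B := fun w => by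
    refine abs_sum_negMulLogb_sub_le
      (fun y => sum_nonneg fun x _ => mul_nonneg (hR.1 _) ((hC₁ x).1 y))
      (fun y => sum_nonneg fun x _ => mul_nonneg (hR.1 _) ((hC₂ x).1 y))
      (hmarg C₁ hC₁ w) (hmarg C₂ hC₂ w) hε0 hε1 ?_
    calc ∑ y, |∑ x, R (w, x) * C₁ x y - ∑ x, R (w, x) * C₂ x y|
        ≤ ∑ y, ∑ x, R (w, x) * |C₁ x y - C₂ x y| := sum_le_sum fun y _ => by
          simp only [← sum_sub_distrib, ← mul_sub]
          refine (abs_sum_le_sum_abs _ _).trans_eq (sum_congr rfl fun x _ => ?_)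
          rw [abs_mul, abs_of_nonneg (hR.1 _)]
      _ ≤ ∑ x, R (w, x) * ε := by
          rw [sum_comm]
          exact sum_le_sum fun x _ => by rw [← mul_sum]; exact mul_le_mul_of_nonneg_left (hd x) (hR.1 _)
      _ = ε * ∑ x, R (w, x) := by rw [← sum_mul, mul_comm]
  calc _ = |∑ w, (∑ y, negMulLogb (∑ x, R (w, x) * C₁ x y)
          - ∑ y, negMulLogb (∑ x, R (w, x) * C₂ x y))| := by
        simp only [ent_eq_sum_negMulLogb, Fintype.sum_prod_type, sum_sub_distrib]
    _ ≤ ∑ w, (∑ x, R (w, x)) * B := (abs_sum_le_sum_abs _ _).trans (sum_le_sum fun w _ => hfiber w)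
    _ = B := by rw [← sum_mul, ← Fintype.sum_prod_type, hR.2, one_mul]

end Channel

lemma sum_prod_channel_eq_one {ι X Y : Type*} [Fintype ι] [DecidableEq ι] [Fintype Y]
    {K : ι → X → Y → ℝ} (hK : ∀ i x, IsPMF (K i x)) (x : ι → X) :
    ∑ y : ι → Y, ∏ i, K i (x i) (y i) = 1 := by
  classical
  rw [← Fintype.prod_sum]
  exact prod_eq_one fun i _ => (hK i (x i)).2

section ProductChannel

variable {W ι X Y : Type*} [Fintype ι] [DecidableEq ι] [Fintype X]

noncomputable def prodChannelJoint (G : W × (ι → X) → ℝ) (K : ι → X → Y → ℝ) :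
    W × (ι → Y) → ℝ :=
  fun t => ∑ x : ι → X, G (t.1, x) * ∏ i, K i (x i) (t.2 i)

lemma sum_prodChannelJoint [Fintype Y] {G : W × (ι → X) → ℝ} {K : ι → X → Y → ℝ}
    (hK : ∀ i x, IsPMF (K i x)) (w : W) :
    ∑ y, prodChannelJoint G K (w, y) = ∑ x, G (w, x) := by
  simp only [prodChannelJoint]
  rw [sum_comm]
  simp only [← mul_sum, sum_prod_channel_eq_one hK, mul_one]

lemma prodChannelJoint_funSplitAt (G : W × (ι → X) → ℝ) (K : ι → X → Y → ℝ)
    (j : ι) (w : W) (r : {i // i ≠ j} → Y) (y : Y) :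
    prodChannelJoint G K (w, (Equiv.funSplitAt j Y).symm (y, r))
      = ∑ x, (G (w, x) * ∏ i : {i // i ≠ j}, K i (x i) (r i)) * K j (x j) y := by
  refine sum_congr rfl fun x _ => ?_
  rw [Fintype.prod_eq_mul_prod_subtype_ne _ j]
  have hr : ∀ i : {i // i ≠ j}, (if (i : ι) = j then y else r i) = r i := fun i => if_neg i.2
  simp only [Equiv.funSplitAt_symm_apply, Subtype.coe_eta, dite_eq_ite, ↓reduceDIte, hr]
  ring

/-- Once coordinate `j` is split off, `(W, Y_{≠ j})` is the side information of
`abs_ent_sub_ent_le_of_channel`. -/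
lemma abs_ent_prodChannelJoint_update_sub_le [Fintype W] [Fintype Y] {G : W × (ι → X) → ℝ}
    (hG : IsPMF G) {K : ι → X → Y → ℝ} (hK : ∀ i x, IsPMF (K i x)) (j : ι) {C : X → Y → ℝ}
    (hC : ∀ x, IsPMF (C x)) {ε : ℝ} (hε0 : 0 ≤ ε) (hε1 : ε ≤ 1)
    (hd : ∀ x, ∑ y, |K j x y - C x y| ≤ ε) :
    |ent (prodChannelJoint G K) - ent (prodChannelJoint G (Function.update K j C))|
      ≤ 2 * H2 ε + 2 * ε * logb 2 (Fintype.card Y) := by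
  let e : (W × ({i // i ≠ j} → Y)) × Y ≃ W × (ι → Y) :=
    (Equiv.prodAssoc _ _ _).trans
      ((Equiv.refl W).prodCongr ((Equiv.prodComm _ _).trans (Equiv.funSplitAt j Y).symm))
  let R : (W × ({i // i ≠ j} → Y)) × (ι → X) → ℝ :=
    fun t => G (t.1.1, t.2) * ∏ i : {i // i ≠ j}, K i (t.2 i) (t.1.2 i)
  have hR : IsPMF R := by
    refine ⟨fun t => mul_nonneg (hG.1 _) (prod_nonneg fun i _ => (hK _ _).1 _), ?_⟩
    simp only [R, Fintype.sum_prod_type]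
    rw [← hG.2, Fintype.sum_prod_type]
    refine sum_congr rfl fun w _ => ?_
    rw [sum_comm]
    refine sum_congr rfl fun x _ => ?_
    rw [← mul_sum, sum_prod_channel_eq_one (fun i : {i // i ≠ j} => hK i) fun i => x i, mul_one]
  have hsplit : ∀ K' : ι → X → Y → ℝ, (∀ i : {i // i ≠ j}, K' i = K i) →
      (fun t => prodChannelJoint G K' (e t)) = fun t => ∑ x, R (t.1, x) * K' j (x j) t.2 := by
    intro K' hK'
    funext ⟨⟨w, r⟩, y⟩
    simp [e, prodChannelJoint_funSplitAt, R, hK']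
  rw [← ent_comp_equiv e, ← ent_comp_equiv e (prodChannelJoint G _), hsplit K fun _ => rfl,
    hsplit _ fun i => Function.update_of_ne i.2 _ _, Function.update_self]
  exact abs_ent_sub_ent_le_of_channel hR (fun x => hK j (x j)) (fun x => hC (x j)) hε0 hε1
    fun x => hd (x j)

/-- Hybrid argument: switch the coordinates from `C₂` to `C₁` one at a time. -/
lemma abs_ent_prodChannelJoint_sub_le [Fintype W] [Fintype Y] {G : W × (ι → X) → ℝ}
    (hG : IsPMF G) {C₁ C₂ : X → Y → ℝ} (hC₁ : ∀ x, IsPMF (C₁ x)) (hC₂ : ∀ x, IsPMF (C₂ x))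
    {ε : ℝ} (hε0 : 0 ≤ ε) (hε1 : ε ≤ 1) (hd : ∀ x, ∑ y, |C₁ x y - C₂ x y| ≤ ε) :
    |ent (prodChannelJoint G fun _ => C₁) - ent (prodChannelJoint G fun _ => C₂)|
      ≤ Fintype.card ι * (2 * H2 ε + 2 * ε * logb 2 (Fintype.card Y)) := by
  set B := 2 * H2 ε + 2 * ε * logb 2 (Fintype.card Y)
  have hybrid : ∀ s : Finset ι,
      |ent (prodChannelJoint G fun i => if i ∈ s then C₁ else C₂)
        - ent (prodChannelJoint G fun _ => C₂)| ≤ s.card * B := by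
    intro s
    induction s using Finset.induction_on with
    | empty => simp
    | insert a s ha ih =>
      have hK : ∀ i x, IsPMF ((fun i => if i ∈ insert a s then C₁ else C₂) i x) := fun i x => by
        dsimp only
        split_ifs
        exacts [hC₁ x, hC₂ x]
      have hupd : Function.update (fun i => if i ∈ insert a s then C₁ else C₂) a C₂
          = fun i => if i ∈ s then C₁ else C₂ := by
        funext i
        by_cases hi : i = a
        · subst hi; simp [ha]
        · simp [hi]
      have step := abs_ent_prodChannelJoint_update_sub_le hG hK a hC₂ hε0 hε1
        (by simpa using hd)
      rw [hupd] at step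
      calc _ ≤ _ := abs_sub_le _ (ent (prodChannelJoint G fun i => if i ∈ s then C₁ else C₂)) _
        _ ≤ B + s.card * B := add_le_add step ih
        _ = (insert a s).card * B := by rw [card_insert_of_notMem ha]; push_cast; ring
  simpa using hybrid univ

lemma sum_fst_prodChannelJoint [Fintype W] (G : W × (ι → X) → ℝ) (K : ι → X → Y → ℝ)
    (y : ι → Y) :
    ∑ w, prodChannelJoint G K (w, y)
      = prodChannelJoint (fun t : Unit × (ι → X) => ∑ w, G (w, t.2)) K ((), y) := by
  simp only [prodChannelJoint, sum_mul]
  exact sum_comm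

lemma abs_MI_prodChannelJoint_sub_le [Fintype W] [Fintype Y] {G : W × (ι → X) → ℝ}
    (hG : IsPMF G) {C₁ C₂ : X → Y → ℝ} (hC₁ : ∀ x, IsPMF (C₁ x)) (hC₂ : ∀ x, IsPMF (C₂ x))
    {ε : ℝ} (hε0 : 0 ≤ ε) (hε1 : ε ≤ 1) (hd : ∀ x, ∑ y, |C₁ x y - C₂ x y| ≤ ε) :
    |MI (prodChannelJoint G fun _ => C₁) - MI (prodChannelJoint G fun _ => C₂)|
      ≤ Fintype.card ι * (4 * H2 ε + 4 * ε * logb 2 (Fintype.card Y)) := by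
  let G' : Unit × (ι → X) → ℝ := fun t => ∑ w, G (w, t.2)
  have hG' : IsPMF G' := by
    refine ⟨fun t => sum_nonneg fun w _ => hG.1 _, ?_⟩
    simp only [G', Fintype.sum_prod_type, Fintype.univ_unit, sum_singleton]
    rw [sum_comm, ← Fintype.sum_prod_type, hG.2]
  have hY : ∀ C : X → Y → ℝ, ent (fun y => ∑ w, prodChannelJoint G (fun _ => C) (w, y))
      = ent (prodChannelJoint G' fun _ => C) := fun C => by
    simp only [sum_fst_prodChannelJoint]
    exact ent_comp_equiv (Equiv.punitProd _).symm _
  have hW : ∀ C : X → Y → ℝ, (∀ x, IsPMF (C x)) →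
      (fun w => ∑ y, prodChannelJoint G (fun _ => C) (w, y)) = fun w => ∑ x, G (w, x) :=
    fun C hC => funext (sum_prodChannelJoint fun _ => hC)
  have hMI : MI (prodChannelJoint G fun _ => C₁) - MI (prodChannelJoint G fun _ => C₂)
      = (ent (prodChannelJoint G' fun _ => C₁) - ent (prodChannelJoint G' fun _ => C₂))
        - (ent (prodChannelJoint G fun _ => C₁) - ent (prodChannelJoint G fun _ => C₂)) := by
    simp only [MI, hW C₁ hC₁, hW C₂ hC₂, hY]
    ring
  rw [hMI]
  calc _ ≤ _ := abs_sub _ _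
    _ ≤ _ := add_le_add (abs_ent_prodChannelJoint_sub_le hG' hC₁ hC₂ hε0 hε1 hd)
          (abs_ent_prodChannelJoint_sub_le hG hC₁ hC₂ hε0 hε1 hd)
    _ = _ := by ring

end ProductChannel

noncomputable def jointUX {U V Xs : Type*} [Fintype V] (PU : U → ℝ) (PVU : U → V → ℝ)
    (E : V → Xs → ℝ) : U × Xs → ℝ :=
  fun t => PU t.1 * ∑ v, PVU t.1 v * E v t.2

lemma isPMF_jointUX {U V Xs : Type*} [Fintype U] [Fintype V] [Fintype Xs] {PU : U → ℝ}
    {PVU : U → V → ℝ} {E : V → Xs → ℝ} (hPU : IsPMF PU) (hPVU : ∀ u, IsPMF (PVU u))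
    (hE : ∀ v, IsPMF (E v)) : IsPMF (jointUX PU PVU E) := by
  refine ⟨fun t => mul_nonneg (hPU.1 _)
    (sum_nonneg fun v _ => mul_nonneg ((hPVU _).1 v) ((hE v).1 _)), ?_⟩
  simp only [jointUX, Fintype.sum_prod_type, ← mul_sum]
  rw [← hPU.2]
  refine sum_congr rfl fun u _ => ?_
  rw [sum_comm]
  simp only [← mul_sum, (hE _).2, mul_one, (hPVU u).2]

lemma PUOut_eq_prodChannelJoint {U V X Y : Type*} [Fintype V] [Fintype X] (n : ℕ)
    (C : X → Y → ℝ) (PU : U → ℝ) (PVU : U → V → ℝ) (E : V → (Fin n → X) → ℝ) :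
    PUOut n C PU PVU E = prodChannelJoint (jointUX PU PVU E) fun _ => C := by
  funext t
  simp only [PUOut, prodChannelJoint, jointUX]
  rw [sum_comm]
  refine sum_congr rfl fun x _ => ?_
  rw [mul_sum, sum_mul]
  exact sum_congr rfl fun v _ => by ring

lemma abs_MI_PUOut_sub_le {U V X Y : Type*} [Fintype U] [Fintype V] [Fintype X] [Fintype Y]
    (n : ℕ) {PU : U → ℝ} {PVU : U → V → ℝ} {E : V → (Fin n → X) → ℝ} (hPU : IsPMF PU)
    (hPVU : ∀ u, IsPMF (PVU u)) (hE : ∀ v, IsPMF (E v)) {C₁ C₂ : X → Y → ℝ}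
    (hC₁ : ∀ x, IsPMF (C₁ x)) (hC₂ : ∀ x, IsPMF (C₂ x)) {ε : ℝ} (hε0 : 0 ≤ ε) (hε1 : ε ≤ 1)
    (hd : ∀ x, ∑ y, |C₁ x y - C₂ x y| ≤ ε) :
    |MI (PUOut n C₁ PU PVU E) - MI (PUOut n C₂ PU PVU E)|
      ≤ n * (4 * H2 ε + 4 * ε * logb 2 (Fintype.card Y)) := by
  simpa only [PUOut_eq_prodChannelJoint, Fintype.card_fin] using
    abs_MI_prodChannelJoint_sub_le (isPMF_jointUX hPU hPVU hE) hC₁ hC₂ hε0 hε1 hd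

theorem common_rate_continuity_general
    {X Y Z S1 S2 U V : Type*}
    [Fintype X] [Fintype Y] [Fintype Z] [Fintype S1] [Fintype S2] [Fintype U] [Fintype V]
    [Nonempty S1] [Nonempty S2]
    (ε : ℝ) (hε : ε ∈ Set.Ioo (0 : ℝ) 1)
    (W1 : S1 → X → Y → ℝ) (V1 : S1 → X → Z → ℝ)
    (W2 : S2 → X → Y → ℝ) (V2 : S2 → X → Z → ℝ)
    (hW1 : ∀ s x, IsPMF (W1 s x)) (hV1 : ∀ s x, IsPMF (V1 s x))
    (hW2 : ∀ s x, IsPMF (W2 s x)) (hV2 : ∀ s x, IsPMF (V2 s x))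
    (hDW1 : ∀ s2, ∃ s1, ∀ x, ∑ y, |W1 s1 x y - W2 s2 x y| ≤ ε)
    (hDW2 : ∀ s1, ∃ s2, ∀ x, ∑ y, |W1 s1 x y - W2 s2 x y| ≤ ε)
    (hDV1 : ∀ s2, ∃ s1, ∀ x, ∑ z, |V1 s1 x z - V2 s2 x z| ≤ ε)
    (hDV2 : ∀ s1, ∃ s2, ∀ x, ∑ z, |V1 s1 x z - V2 s2 x z| ≤ ε)
    (n : ℕ)
    (PU : U → ℝ) (PVU : U → V → ℝ) (E : V → (Fin n → X) → ℝ)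
    (hPU : IsPMF PU) (hPVU : ∀ u, IsPMF (PVU u)) (hE : ∀ v, IsPMF (E v)) :
    |(1 / n : ℝ) * (⨅ s : S1, min (MI (PUOut n (W1 s) PU PVU E)) (MI (PUOut n (V1 s) PU PVU E)))
      - (1 / n : ℝ) * (⨅ s : S2, min (MI (PUOut n (W2 s) PU PVU E)) (MI (PUOut n (V2 s) PU PVU E)))|
      ≤ 4 * H2 ε + 4 * ε * max (Real.logb 2 (Fintype.card Y)) (Real.logb 2 (Fintype.card Z)) := by
  obtain ⟨hε0, hε1⟩ := hε
  set B := 4 * H2 ε + 4 * ε * max (logb 2 (Fintype.card Y)) (logb 2 (Fintype.card Z))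
  have hB : 0 ≤ B := add_nonneg (mul_nonneg zero_le_four (H2_nonneg hε0.le hε1.le))
    (mul_nonneg (by positivity) (le_max_of_le_left logb_card_nonneg))
  have hY : ∀ s₁ s₂, (∀ x, ∑ y, |W1 s₁ x y - W2 s₂ x y| ≤ ε) →
      |MI (PUOut n (W1 s₁) PU PVU E) - MI (PUOut n (W2 s₂) PU PVU E)| ≤ n * B := fun s₁ s₂ h =>
    (abs_MI_PUOut_sub_le n hPU hPVU hE (hW1 s₁) (hW2 s₂) hε0.le hε1.le h).trans
      (by dsimp only [B]; gcongr; exact le_max_left _ _)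
  have hZ : ∀ s₁ s₂, (∀ x, ∑ z, |V1 s₁ x z - V2 s₂ x z| ≤ ε) →
      |MI (PUOut n (V1 s₁) PU PVU E) - MI (PUOut n (V2 s₂) PU PVU E)| ≤ n * B := fun s₁ s₂ h =>
    (abs_MI_PUOut_sub_le n hPU hPVU hE (hV1 s₁) (hV2 s₂) hε0.le hε1.le h).trans
      (by dsimp only [B]; gcongr; exact le_max_right _ _)
  have hinf := abs_ciInf_min_sub_ciInf_min_le
    (fun s₂ => (hDW1 s₂).imp fun s₁ => hY s₁ s₂) (fun s₁ => (hDW2 s₁).imp fun s₂ => hY s₁ s₂)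
    (fun s₂ => (hDV1 s₂).imp fun s₁ => hZ s₁ s₂) (fun s₁ => (hDV2 s₁).imp fun s₂ => hZ s₁ s₂)
  rw [← mul_sub, abs_mul, abs_of_nonneg (by positivity)]
  calc _ ≤ 1 / n * (n * B) := by gcongr
    _ ≤ B := by
      rcases eq_or_ne (n : ℝ) 0 with hn | hn
      · simp [hn, hB]
      · rw [← mul_assoc, one_div_mul_cancel hn, one_mul]

/-- continuity of the maximum achievable common-message rate of the
compound BCC.  The hypotheses `hDW1, hDW2, hDV1, hDV2` express `D(𝔚₁,𝔚₂) ≤ ε`. -/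
theorem common_rate_continuity
    {X Y Z S1 S2 U V : Type*}
    [Fintype X] [Fintype Y] [Fintype Z] [Fintype S1] [Fintype S2] [Fintype U] [Fintype V]
    [Nonempty X] [Nonempty Y] [Nonempty Z] [Nonempty S1] [Nonempty S2] [Nonempty U] [Nonempty V]
    (ε : ℝ) (hε : ε ∈ Set.Ioo (0 : ℝ) 1)
    (W1 : S1 → X → Y → ℝ) (V1 : S1 → X → Z → ℝ)
    (W2 : S2 → X → Y → ℝ) (V2 : S2 → X → Z → ℝ)
    (hW1 : ∀ s x, IsPMF (W1 s x)) (hV1 : ∀ s x, IsPMF (V1 s x))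
    (hW2 : ∀ s x, IsPMF (W2 s x)) (hV2 : ∀ s x, IsPMF (V2 s x))
    (hDW1 : ∀ s2, ∃ s1, ∀ x, ∑ y, |W1 s1 x y - W2 s2 x y| ≤ ε)
    (hDW2 : ∀ s1, ∃ s2, ∀ x, ∑ y, |W1 s1 x y - W2 s2 x y| ≤ ε)
    (hDV1 : ∀ s2, ∃ s1, ∀ x, ∑ z, |V1 s1 x z - V2 s2 x z| ≤ ε)
    (hDV2 : ∀ s1, ∃ s2, ∀ x, ∑ z, |V1 s1 x z - V2 s2 x z| ≤ ε)
    (n : ℕ) (hn : 1 ≤ n)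
    (PU : U → ℝ) (PVU : U → V → ℝ) (E : V → (Fin n → X) → ℝ)
    (hPU : IsPMF PU) (hPVU : ∀ u, IsPMF (PVU u)) (hE : ∀ v, IsPMF (E v)) :
    |(1 / n : ℝ) * (⨅ s : S1, min (MI (PUOut n (W1 s) PU PVU E)) (MI (PUOut n (V1 s) PU PVU E)))
      - (1 / n : ℝ) * (⨅ s : S2, min (MI (PUOut n (W2 s) PU PVU E)) (MI (PUOut n (V2 s) PU PVU E)))|
      ≤ 4 * H2 ε + 4 * ε * max (Real.logb 2 (Fintype.card Y)) (Real.logb 2 (Fintype.card Z)) :=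
  common_rate_continuity_general ε hε W1 V1 W2 V2 hW1 hV1 hW2 hV2 hDW1 hDW2 hDV1 hDV2 n PU PVU E hPU
    hPVU hE
end
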